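/- Let f0, f1 be the automatic transformations of the Mealy automaton A₃, with products written so that (f g)(u) = f(g(u)). Then the following equalities of transformations of infinite words over Fin 4 hold: f0² f0 = f0² f1 = f0²; f1 f0² = f0²; f0 f1 f0 = f0; f0 f1² f0 = f0²; and f1³ f0 f1 = f1 f0 f1³. -/

import Mathlib

/-- The sequence of states visited by a Mealy automaton with transition function `tr`,
started at state `q`, while reading the infinite word `u`. -/
def stateSeq {X Q : Type*} (tr : X → Q → Q) (q : Q) (u : ℕ → X) : ℕ → Q
  | 0 => q
  | k + 1 => tr (u k) (stateSeq tr q u k)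

/-- The automatic transformation of infinite words defined by the Mealy automaton with
transition function `tr` and output function `out` at the state `q`. -/
def autTrans {X Q : Type*} (tr : X → Q → Q) (out : X → Q → X) (q : Q) (u : ℕ → X) : ℕ → X :=
  fun n => out (u n) (stateSeq tr q u n)

/-- The transformation given by a word of states: the product (composition, applied from
right to left) of the corresponding automatic transformations. -/
def wordTrans {X Q : Type*} (tr : X → Q → Q) (out : X → Q → X) (w : List Q) :
    (ℕ → X) → (ℕ → X) :=
  (w.map (autTrans tr out)).foldr (· ∘ ·) id

/-- The growth function of a Mealy automaton: `growth tr out n` is the number of distinct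
transformations of infinite words obtained as compositions of exactly `n` automatic
transformations of the automaton. -/
noncomputable def growth {X Q : Type*} (tr : X → Q → Q) (out : X → Q → X) (n : ℕ) : ℕ :=
  Set.ncard { g : (ℕ → X) → (ℕ → X) | ∃ w : List Q, w.length = n ∧ wordTrans tr out w = g }

/-- The `i`-th finite difference of a function `γ`. -/
def fdiff (γ : ℕ → ℤ) : ℕ → ℕ → ℤ
  | 0, n => γ n
  | i + 1, n => fdiff γ i n - fdiff γ i (n - 1)

/-- Output function of the automaton `A₃`: at `q0` the outputs of `(x0,x1,x2,x3)` are
`(x1,x2,x2,x2)`; at `q1` they are `(x3,x0,x2,x2)`. -/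
def a3Out : Fin 4 → Fin 2 → Fin 4 := fun x q =>
  if q = 0 then (if x = 0 then 1 else 2)
  else (if x = 0 then 3 else if x = 1 then 0 else 2)

/-- Transition function of the automaton `A₃`: all transitions from `q0` stay at `q0`;
from `q1` the transition goes to `q0` on reading `x0` and stays at `q1` otherwise. -/
def a3Tr : Fin 4 → Fin 2 → Fin 2 := fun x q =>
  if q = 0 then 0 else (if x = 0 then 0 else 1)

/-- The automatic transformations `f0, f1` of the automaton `A₃` at states `q0, q1`. -/
def a3F (q : Fin 2) : (ℕ → Fin 4) → (ℕ → Fin 4) := autTrans a3Tr a3Out q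

/-! Two states of a Mealy automaton related by a bisimulation (a relation preserved by the
transitions on whose pairs the outputs agree) define the same transformation. A composition of
automatic transformations is itself automatic: its states are words of states, and a letter runs
through the word from right to left. Each relation is thus an equality between two states of this
word automaton, and it is certified by the finite set of pairs reachable from them, on which the
outputs are checked to agree. -/

section Mealy

variable {X Q Q' : Type*}

theorem stateSeq_rel {tr : X → Q → Q} {tr' : X → Q' → Q'} {q : Q} {q' : Q'} (R : Q → Q' → Prop)
    (h : R q q') (htr : ∀ x p p', R p p' → R (tr x p) (tr' x p')) (u : ℕ → X) (n : ℕ) :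
    R (stateSeq tr q u n) (stateSeq tr' q' u n) := by
  induction n with
  | zero => exact h
  | succ k ih => exact htr _ _ _ ih

theorem autTrans_eq_of_bisimulation {tr : X → Q → Q} {out : X → Q → X} {tr' : X → Q' → Q'}
    {out' : X → Q' → X} {q : Q} {q' : Q'} (R : Q → Q' → Prop) (h : R q q')
    (hout : ∀ x p p', R p p' → out x p = out' x p')
    (htr : ∀ x p p', R p p' → R (tr x p) (tr' x p')) :
    autTrans tr out q = autTrans tr' out' q' :=
  funext fun u => funext fun n => hout _ _ _ (stateSeq_rel R h htr u n)

theorem autTrans_eq_of_list_bisimulation [DecidableEq Q] {tr : X → Q → Q} {out : X → Q → X}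
    {q q' : Q} (L : List (Q × Q)) (h : (q, q') ∈ L)
    (hL : ∀ x, ∀ s ∈ L, out x s.1 = out x s.2 ∧
      ((tr x s.1, tr x s.2) ∈ L ∨ tr x s.1 = tr x s.2)) :
    autTrans tr out q = autTrans tr out q' := by
  refine autTrans_eq_of_bisimulation (fun p p' => (p, p') ∈ L ∨ p = p') (.inl h) ?_ ?_
  · rintro x p p' (hp | rfl)
    exacts [(hL x _ hp).1, rfl]
  · rintro x p p' (hp | rfl)
    exacts [(hL x _ hp).2, .inr rfl]

variable (tr : X → Q → Q) (out : X → Q → X)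

/-- The last state of the word acts first, as in `wordTrans`. -/
def wordOut : X → List Q → X
  | x, [] => x
  | x, q :: w => out (wordOut x w) q

def wordTr : X → List Q → List Q
  | _, [] => []
  | x, q :: w => tr (wordOut out x w) q :: wordTr x w

theorem autTrans_wordTr_nil : autTrans (wordTr tr out) (wordOut out) [] = id := by
  have hnil (u : ℕ → X) (n : ℕ) : stateSeq (wordTr tr out) [] u n = [] := by
    induction n with
    | zero => rfl
    | succ k ih => rw [stateSeq, ih, wordTr]
  funext u n
  rw [autTrans, hnil, wordOut, id]

theorem stateSeq_wordTr_cons (q : Q) (w : List Q) (u : ℕ → X) (n : ℕ) :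
    stateSeq (wordTr tr out) (q :: w) u n
      = stateSeq tr q (autTrans (wordTr tr out) (wordOut out) w u) n
        :: stateSeq (wordTr tr out) w u n := by
  induction n with
  | zero => rfl
  | succ k ih => rw [stateSeq, ih, wordTr, stateSeq, stateSeq, autTrans]

theorem autTrans_comp_autTrans_wordTr (q : Q) (w : List Q) :
    autTrans tr out q ∘ autTrans (wordTr tr out) (wordOut out) w
      = autTrans (wordTr tr out) (wordOut out) (q :: w) := by
  funext u n
  rw [Function.comp_apply, autTrans, autTrans, autTrans, stateSeq_wordTr_cons, wordOut]

theorem wordTrans_eq_autTrans (w : List Q) :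
    wordTrans tr out w = autTrans (wordTr tr out) (wordOut out) w := by
  induction w with
  | nil => exact (autTrans_wordTr_nil tr out).symm
  | cons q w ih =>
    rw [← autTrans_comp_autTrans_wordTr, ← ih]
    rfl

theorem wordTrans_eq_of_list_bisimulation [DecidableEq Q] (v w : List Q)
    (L : List (List Q × List Q)) (h : (v, w) ∈ L)
    (hL : ∀ x, ∀ s ∈ L, wordOut out x s.1 = wordOut out x s.2 ∧
      ((wordTr tr out x s.1, wordTr tr out x s.2) ∈ L ∨
        wordTr tr out x s.1 = wordTr tr out x s.2)) :
    wordTrans tr out v = wordTrans tr out w := by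
  rw [wordTrans_eq_autTrans, wordTrans_eq_autTrans]
  exact autTrans_eq_of_list_bisimulation L h hL

end Mealy

/-- The defining relations of the semigroup `S_{A₃}` hold among the automatic
transformations `f0, f1` of `A₃` (products composed from right to left). -/
theorem relations_a3 :
    a3F 0 ∘ a3F 0 ∘ a3F 0 = a3F 0 ∘ a3F 0 ∧
    a3F 0 ∘ a3F 0 ∘ a3F 1 = a3F 0 ∘ a3F 0 ∧
    a3F 1 ∘ a3F 0 ∘ a3F 0 = a3F 0 ∘ a3F 0 ∧
    a3F 0 ∘ a3F 1 ∘ a3F 0 = a3F 0 ∧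
    a3F 0 ∘ a3F 1 ∘ a3F 1 ∘ a3F 0 = a3F 0 ∘ a3F 0 ∧
    a3F 1 ∘ a3F 1 ∘ a3F 1 ∘ a3F 0 ∘ a3F 1 = a3F 1 ∘ a3F 0 ∘ a3F 1 ∘ a3F 1 ∘ a3F 1 := by
  -- each list holds the non-diagonal pairs of state words reachable from the initial pair
  have rel := wordTrans_eq_of_list_bisimulation a3Tr a3Out
  refine ⟨rel [0, 0, 0] [0, 0] [([0, 0, 0], [0, 0])] (by decide) (by decide),
    rel [0, 0, 1] [0, 0] [([0, 0, 1], [0, 0]), ([0, 0, 0], [0, 0])] (by decide) (by decide),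
    rel [1, 0, 0] [0, 0] [([1, 0, 0], [0, 0])] (by decide) (by decide),
    rel [0, 1, 0] [0] [([0, 1, 0], [0])] (by decide) (by decide),
    rel [0, 1, 1, 0] [0, 0] [([0, 1, 1, 0], [0, 0]), ([0, 0, 1, 0], [0, 0])] (by decide) (by decide),
    rel [1, 1, 1, 0, 1] [1, 0, 1, 1, 1]
      [([1, 1, 1, 0, 1], [1, 0, 1, 1, 1]), ([1, 1, 1, 0, 0], [1, 0, 1, 1, 0]),
        ([1, 1, 1, 0, 0], [1, 0, 0, 1, 0])] (by decide) (by decide)⟩
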